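/- arXiv:0709.2324 — 10 statements merged into one kernel-verified Lean document; each statement's English description precedes it below -/
import Mathlib

section
/- Assume F : π → Matrix (Fin n) (Fin n) ℂ is bounded and satisfies condition (1.4): there exist a finite set S ⊆ π and C > 0 such that for every g ∉ S the matrix F g is invertible and ‖(F g)⁻¹‖ ≤ C. Then the multiplication operator Φ_F on H = ℓ²(π; ℂⁿ) is invertible modulo compact operators: there exists a bounded operator Ψ : H →L[ℂ] H such that Φ_F ∘ Ψ − id and Ψ ∘ Φ_F − id are compact. In particular Φ_F is a Fredholm operator. -/
open scoped Matrix.Norms.L2Operator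

/-!
Invert `F g` off `S` and put `0` on `S`: by (1.4) this is a bounded family, so it defines a
multiplication operator `Ψ`, and `Φ ∘ Ψ - 1`, `Ψ ∘ Φ - 1` vanish at every coordinate outside `S`.
An operator whose values are supported in a finite set of coordinates with finite-dimensional
fibres factors through the finite-rank projection onto those coordinates, hence is compact.
-/

namespace lp

variable {𝕜 α : Type*} {E : α → Type*} [NontriviallyNormedField 𝕜]
  [∀ i, NormedAddCommGroup (E i)] [∀ i, NormedSpace 𝕜 (E i)] [∀ i, LocallyCompactSpace (E i)]
  {p : ENNReal} [Fact (1 ≤ p)]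

theorem isCompactOperator_of_apply_eq_zero_of_notMem (K : lp E p →L[𝕜] lp E p) (S : Finset α)
    (hK : ∀ f, ∀ i ∉ S, K f i = 0) : IsCompactOperator K := by
  classical
  let P : lp E p →L[𝕜] lp E p :=
    ∑ i ∈ S, singleContinuousLinearMap 𝕜 E p i ∘L evalCLM 𝕜 E p i
  have hP : IsCompactOperator P := (compactOperator _ _ _).sum_mem fun i _ ↦
    ((isCompactOperator_of_locallyCompactSpace_dom (evalCLM 𝕜 E p i)).clm_comp
      (singleContinuousLinearMap 𝕜 E p i) :)
  have hPK : P ∘L K = K := by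
    ext f i
    simp only [P, ContinuousLinearMap.comp_apply, sum_apply, lp.coeFn_sum, Finset.sum_apply,
      singleContinuousLinearMap_apply, lp.coeFn_single, evalCLM, LinearMap.mkContinuous_apply,
      evalₗ_apply, Finset.sum_pi_single]
    split_ifs with hi
    · rfl
    · exact (hK f i hi).symm
  rw [← hPK]
  exact hP.comp_clm K

end lp

theorem multiplication_operator_fredholm_general
    {π : Type*} {n : ℕ}
    (F : π → Matrix (Fin n) (Fin n) ℂ)
    (h14 : ∃ (S : Finset π) (C : ℝ), 0 < C ∧
      ∀ g ∉ S, IsUnit (F g) ∧ ‖(F g)⁻¹‖ ≤ C)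
    (Φ : lp (fun _ : π => EuclideanSpace ℂ (Fin n)) 2 →L[ℂ]
         lp (fun _ : π => EuclideanSpace ℂ (Fin n)) 2)
    (hΦ : ∀ (ξ : lp (fun _ : π => EuclideanSpace ℂ (Fin n)) 2) (g : π),
      Φ ξ g = (F g).mulVec (ξ g)) :
    ∃ Ψ : lp (fun _ : π => EuclideanSpace ℂ (Fin n)) 2 →L[ℂ]
          lp (fun _ : π => EuclideanSpace ℂ (Fin n)) 2,
      IsCompactOperator (Φ ∘L Ψ - ContinuousLinearMap.id ℂ (lp (fun _ : π => EuclideanSpace ℂ (Fin n)) 2)) ∧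
      IsCompactOperator (Ψ ∘L Φ - ContinuousLinearMap.id ℂ (lp (fun _ : π => EuclideanSpace ℂ (Fin n)) 2)) := by
  classical
  obtain ⟨S, C, hC, hS⟩ := h14
  let G (g : π) : Matrix (Fin n) (Fin n) ℂ := if g ∈ S then 0 else (F g)⁻¹
  have hG (g : π) : ‖Matrix.toEuclideanCLM (𝕜 := ℂ) (G g)‖ ≤ C := by
    rw [Matrix.l2_opNorm_toEuclideanCLM]
    by_cases hg : g ∈ S
    · simpa [G, hg] using hC.le
    · simpa [G, hg] using (hS g hg).2
  have hinv (g : π) (hg : g ∉ S) : F g * G g = 1 ∧ G g * F g = 1 := by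
    have hdet := (Matrix.isUnit_iff_isUnit_det _).mp (hS g hg).1
    simp only [G, if_neg hg]
    exact ⟨Matrix.mul_nonsing_inv _ hdet, Matrix.nonsing_inv_mul _ hdet⟩
  refine ⟨lp.mapCLM 2 (fun g ↦ Matrix.toEuclideanCLM (𝕜 := ℂ) (G g)) hC.le hG, ?_, ?_⟩ <;>
    refine lp.isCompactOperator_of_apply_eq_zero_of_notMem _ S fun ξ g hg ↦ WithLp.ofLp_injective 2 ?_
  · simp [hΦ, Matrix.mulVec_mulVec, (hinv g hg).1]
  · simp [hΦ, Matrix.mulVec_mulVec, (hinv g hg).2]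

/-- If `F : π → Matrix (Fin n) (Fin n) ℂ` is bounded and satisfies condition
(1.4) (invertibility with uniformly bounded inverse outside a finite set), then the
block-diagonal multiplication operator `Φ_F` on `ℓ²(π; ℂⁿ)` is invertible modulo compact
operators, i.e. it is a Fredholm operator. -/
theorem multiplication_operator_fredholm
    {π : Type*} [Group π] {n : ℕ}
    (F : π → Matrix (Fin n) (Fin n) ℂ)
    (hbd : ∃ C : ℝ, ∀ g : π, ‖F g‖ ≤ C)
    (h14 : ∃ (S : Finset π) (C : ℝ), 0 < C ∧
      ∀ g ∉ S, IsUnit (F g) ∧ ‖(F g)⁻¹‖ ≤ C)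
    (Φ : lp (fun _ : π => EuclideanSpace ℂ (Fin n)) 2 →L[ℂ]
         lp (fun _ : π => EuclideanSpace ℂ (Fin n)) 2)
    (hΦ : ∀ (ξ : lp (fun _ : π => EuclideanSpace ℂ (Fin n)) 2) (g : π),
      Φ ξ g = (F g).mulVec (ξ g)) :
    ∃ Ψ : lp (fun _ : π => EuclideanSpace ℂ (Fin n)) 2 →L[ℂ]
          lp (fun _ : π => EuclideanSpace ℂ (Fin n)) 2,
      IsCompactOperator (Φ ∘L Ψ - ContinuousLinearMap.id ℂ (lp (fun _ : π => EuclideanSpace ℂ (Fin n)) 2)) ∧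
      IsCompactOperator (Ψ ∘L Φ - ContinuousLinearMap.id ℂ (lp (fun _ : π => EuclideanSpace ℂ (Fin n)) 2)) :=
  multiplication_operator_fredholm_general F h14 Φ hΦ
end

section
/- Assume F : π → Matrix (Fin n) (Fin n) ℂ is bounded and satisfies condition (1.5): for every h ∈ π and every ε > 0 the set {g ∈ π | ‖F (h*g) − F g‖ ≥ ε} is finite. Then for every h ∈ π the commutator Φ_F ∘ L_h − L_h ∘ Φ_F is a compact operator on H = ℓ²(π; ℂⁿ). -/
open scoped Matrix.Norms.L2Operator ENNReal
open Filter Topology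

/-! The commutator acts by `(Φ_F L_h - L_h Φ_F) ξ (g) = (F g - F (h⁻¹ g)) ((L_h ξ) g)`, i.e. as a
bounded operator (`L_h`) followed by multiplication with a matrix function which, by (1.5),
tends to `0` at infinity. Such an operator is the norm limit of its truncations to finite sets
of coordinates; these have finite rank because each fibre `ℂⁿ` is finite-dimensional, and
compact operators form a closed set. -/

namespace lp

variable {𝕜 α : Type*} [RCLike 𝕜] {E : α → Type*} [∀ i, NormedAddCommGroup (E i)]
  [∀ i, NormedSpace 𝕜 (E i)] {p : ℝ≥0∞} [Fact (1 ≤ p)]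
  {M : Type*} [SeminormedAddCommGroup M] [NormedSpace 𝕜 M]

section Truncate

variable [DecidableEq α]

variable (𝕜 E p) in
noncomputable def truncate (s : Finset α) : lp E p →L[𝕜] lp E p :=
  ∑ i ∈ s, (singleContinuousLinearMap 𝕜 E p i).comp (evalCLM 𝕜 E p i)

theorem truncate_apply_apply (s : Finset α) (f : lp E p) (i : α) :
    truncate 𝕜 E p s f i = if i ∈ s then f i else 0 := by
  simp only [truncate, FunLike.coe_sum, Finset.sum_apply, coeFn_sum,
    ContinuousLinearMap.comp_apply, singleContinuousLinearMap_apply, lp.single_apply]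
  exact Finset.sum_pi_single i (fun j => (evalCLM 𝕜 E p j) f) s

theorem isCompactOperator_truncate [∀ i, FiniteDimensional 𝕜 (E i)] (s : Finset α) :
    IsCompactOperator (truncate 𝕜 E p s) := by
  rw [truncate, FunLike.coe_sum]
  exact Finset.sum_induction _ IsCompactOperator (fun _ _ => IsCompactOperator.add)
    isCompactOperator_zero fun i _ =>
      have := FiniteDimensional.proper_rclike 𝕜 (E i)
      (isCompactOperator_of_locallyCompactSpace_dom (evalCLM 𝕜 E p i)).clm_comp
        (singleContinuousLinearMap 𝕜 E p i)

theorem norm_sub_truncate_comp_le {K A : M →L[𝕜] lp E p} {c : α → ℝ}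
    (hK : ∀ x i, ‖K x i‖ ≤ c i * ‖A x i‖) {s : Finset α} {r : ℝ} (hr : 0 ≤ r)
    (hs : ∀ i ∉ s, c i ≤ r) : ‖K - truncate 𝕜 E p s ∘L K‖ ≤ r * ‖A‖ := by
  refine ContinuousLinearMap.opNorm_le_bound _ (by positivity) fun x => ?_
  have hp : p ≠ 0 := (zero_lt_one.trans_le Fact.out).ne'
  have hpointwise : ∀ i, ‖(K - truncate 𝕜 E p s ∘L K) x i‖ ≤ ‖((r : 𝕜) • A x) i‖ := by
    intro i
    rw [_root_.sub_apply, coeFn_sub, Pi.sub_apply,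
      ContinuousLinearMap.comp_apply, truncate_apply_apply, coeFn_smul, Pi.smul_apply,
      norm_smul, RCLike.norm_ofReal, abs_of_nonneg hr]
    split_ifs with hi
    · simpa using mul_nonneg hr (norm_nonneg (A x i))
    · simpa using (hK x i).trans (mul_le_mul_of_nonneg_right (hs i hi) (norm_nonneg _))
  calc ‖(K - truncate 𝕜 E p s ∘L K) x‖ ≤ ‖(r : 𝕜) • A x‖ := norm_mono hp hpointwise
    _ = r * ‖A x‖ := by rw [norm_smul, RCLike.norm_ofReal, abs_of_nonneg hr]
    _ ≤ r * ‖A‖ * ‖x‖ := by rw [mul_assoc]; gcongr; exact A.le_opNorm x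

theorem tendsto_truncate_comp {K A : M →L[𝕜] lp E p} {c : α → ℝ}
    (hc : Tendsto c cofinite (𝓝 0)) (hK : ∀ x i, ‖K x i‖ ≤ c i * ‖A x i‖) :
    Tendsto (fun s => truncate 𝕜 E p s ∘L K) atTop (𝓝 K) := by
  rw [Metric.tendsto_atTop]
  intro ε hε
  set r := ε / (‖A‖ + 1)
  have hr : 0 < r := by positivity
  have hfin : {i | r ≤ c i}.Finite := by
    simpa using eventually_cofinite.1 (hc.eventually (gt_mem_nhds hr))
  refine ⟨hfin.toFinset, fun s hs => ?_⟩
  rw [dist_comm, dist_eq_norm]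
  calc ‖K - truncate 𝕜 E p s ∘L K‖ ≤ r * ‖A‖ :=
        norm_sub_truncate_comp_le hK hr.le fun i hi => by
          by_contra! h
          exact hi (hs (hfin.mem_toFinset.2 h.le))
    _ < r * (‖A‖ + 1) := by gcongr; linarith
    _ = ε := div_mul_cancel₀ ε (by positivity)

end Truncate

theorem isCompactOperator_of_norm_apply_le [∀ i, FiniteDimensional 𝕜 (E i)]
    {K A : M →L[𝕜] lp E p} {c : α → ℝ} (hc : Tendsto c cofinite (𝓝 0))
    (hK : ∀ x i, ‖K x i‖ ≤ c i * ‖A x i‖) : IsCompactOperator K := by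
  classical
  have (i : α) : CompleteSpace (E i) := FiniteDimensional.complete 𝕜 (E i)
  exact isCompactOperator_of_tendsto (tendsto_truncate_comp hc hK)
    (Eventually.of_forall fun s => (isCompactOperator_truncate s).comp_clm K)

end lp

theorem tendsto_norm_cofinite_zero_of_finite_setOf_le {α E : Type*} [SeminormedAddGroup E]
    {f : α → E} (hf : ∀ ε : ℝ, 0 < ε → {i | ε ≤ ‖f i‖}.Finite) :
    Tendsto (fun i => ‖f i‖) cofinite (𝓝 0) := by
  rw [Metric.tendsto_nhds]
  intro ε hε
  simpa [eventually_cofinite] using hf ε hε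

theorem multiplication_operator_commutator_compact_general
    {π : Type*} [Group π] {n : ℕ}
    (F : π → Matrix (Fin n) (Fin n) ℂ)
    (h15 : ∀ h : π, ∀ ε : ℝ, 0 < ε → {g : π | ε ≤ ‖F (h * g) - F g‖}.Finite)
    (Φ : lp (fun _ : π => EuclideanSpace ℂ (Fin n)) 2 →L[ℂ]
         lp (fun _ : π => EuclideanSpace ℂ (Fin n)) 2)
    (hΦ : ∀ (ξ : lp (fun _ : π => EuclideanSpace ℂ (Fin n)) 2) (g : π),
      Φ ξ g = (F g).mulVec (ξ g))
    (L : π → (lp (fun _ : π => EuclideanSpace ℂ (Fin n)) 2 →L[ℂ]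
              lp (fun _ : π => EuclideanSpace ℂ (Fin n)) 2))
    (hL : ∀ (h : π) (ξ : lp (fun _ : π => EuclideanSpace ℂ (Fin n)) 2) (g : π),
      L h ξ g = ξ (h⁻¹ * g)) :
    ∀ h : π, IsCompactOperator (Φ ∘L L h - L h ∘L Φ) := by
  intro h
  have hc : Tendsto (fun g => ‖F g - F (h⁻¹ * g)‖) cofinite (𝓝 0) := by
    have := (tendsto_norm_cofinite_zero_of_finite_setOf_le (h15 h)).comp
      (mul_right_injective h⁻¹).tendsto_cofinite
    simpa [Function.comp_def] using this
  refine lp.isCompactOperator_of_norm_apply_le (A := L h) hc fun ξ g => ?_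
  have hcomm : (Φ ∘L L h - L h ∘L Φ) ξ g =
      (EuclideanSpace.equiv (Fin n) ℂ).symm ((F g - F (h⁻¹ * g)).mulVec (L h ξ g)) := by
    apply WithLp.ofLp_injective
    rw [sub_apply, lp.coeFn_sub, Pi.sub_apply, WithLp.ofLp_sub]
    simp [hΦ, hL, Matrix.sub_mulVec]
  rw [hcomm]
  exact Matrix.l2_opNorm_mulVec _ _

/-- If `F : π → Matrix (Fin n) (Fin n) ℂ` is bounded and satisfies condition
(1.5) (`‖F(hg) − F(g)‖ → 0` as `|g| → ∞`), then the multiplication operator `Φ_F` on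
`ℓ²(π; ℂⁿ)` commutes with every left-translation operator `L_h` modulo compact operators. -/
theorem multiplication_operator_commutator_compact
    {π : Type*} [Group π] {n : ℕ}
    (F : π → Matrix (Fin n) (Fin n) ℂ)
    (hbd : ∃ C : ℝ, ∀ g : π, ‖F g‖ ≤ C)
    (h15 : ∀ h : π, ∀ ε : ℝ, 0 < ε → {g : π | ε ≤ ‖F (h * g) - F g‖}.Finite)
    (Φ : lp (fun _ : π => EuclideanSpace ℂ (Fin n)) 2 →L[ℂ]
         lp (fun _ : π => EuclideanSpace ℂ (Fin n)) 2)
    (hΦ : ∀ (ξ : lp (fun _ : π => EuclideanSpace ℂ (Fin n)) 2) (g : π),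
      Φ ξ g = (F g).mulVec (ξ g))
    (L : π → (lp (fun _ : π => EuclideanSpace ℂ (Fin n)) 2 →L[ℂ]
              lp (fun _ : π => EuclideanSpace ℂ (Fin n)) 2))
    (hL : ∀ (h : π) (ξ : lp (fun _ : π => EuclideanSpace ℂ (Fin n)) 2) (g : π),
      L h ξ g = ξ (h⁻¹ * g)) :
    ∀ h : π, IsCompactOperator (Φ ∘L L h - L h ∘L Φ) :=
  multiplication_operator_commutator_compact_general F h15 Φ hΦ L hL
end

section
/- Assume F : π → Matrix (Fin n) (Fin n) ℂ is bounded and satisfies both condition (1.4) (there exist a finite set S ⊆ π and C > 0 such that for every g ∉ S the matrix F g is invertible and ‖(F g)⁻¹‖ ≤ C) and condition (1.5) (for every h ∈ π and ε > 0 the set {g ∈ π | ‖F (h*g) − F g‖ ≥ ε} is finite). Then the pair (L, Φ_F) is a Fredholm representation of π: Φ_F is invertible modulo compact operators, and for every h ∈ π the operator Φ_F ∘ L_h − L_h ∘ Φ_F is compact. -/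
open scoped Matrix.Norms.L2Operator

/-!
Φ_F is the multiplication operator on ℓ²(π; ℂⁿ) with the bounded symbol g ↦ F g. A multiplication
operator whose symbol tends to zero at infinity is compact: it is the norm limit of its finitely
supported truncations, which have finite rank since ℂⁿ is finite dimensional. Multiplying by the
symbol g ↦ (F g)⁻¹, uniformly bounded by (1.4), inverts Φ_F up to a finitely supported symbol; and
Φ_F L_h − L_h Φ_F is multiplication by g ↦ F g − F (h⁻¹ g), which tends to zero by (1.5),
composed with L_h.
-/

open Filter Topology ENNReal

theorem tendsto_norm_cofinite_nhds_zero_iff {ι F : Type*} [SeminormedAddGroup F] {f : ι → F} :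
    Tendsto (fun i => ‖f i‖) cofinite (𝓝 0) ↔ ∀ ε > 0, {i | ε ≤ ‖f i‖}.Finite := by
  simp only [Metric.tendsto_nhds, eventually_cofinite, dist_zero_right, not_lt, Real.norm_eq_abs,
    abs_norm]

namespace lp

variable {ι 𝕜 : Type*} [NontriviallyNormedField 𝕜] {E : ι → Type*}
  [∀ i, NormedAddCommGroup (E i)] [∀ i, NormedSpace 𝕜 (E i)] {p : ℝ≥0∞}

theorem memℓp_apply (G : lp (fun i => E i →L[𝕜] E i) ∞) (ξ : lp E p) :
    Memℓp (fun i => G i (ξ i)) p :=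
  ((lp.memℓp ξ).norm.const_mul ‖G‖).mono fun i =>
    (G i).le_of_opNorm_le (norm_apply_le_norm top_ne_zero G i) (ξ i)

variable [Fact (1 ≤ p)]

variable (p) in
noncomputable def mulCLM (G : lp (fun i => E i →L[𝕜] E i) ∞) : lp E p →L[𝕜] lp E p :=
  LinearMap.mkContinuous
    { toFun ξ := ⟨fun i => G i (ξ i), memℓp_apply G ξ⟩
      map_add' ξ η := lp.ext <| funext fun i => map_add (G i) (ξ i) (η i)
      map_smul' c ξ := lp.ext <| funext fun i => map_smul (G i) c (ξ i) }
    ‖G‖ fun ξ => by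
      have hp : p ≠ 0 := (zero_lt_one.trans_le Fact.out).ne'
      calc _ ≤ ‖‖G‖ • toNorm ξ‖ := lp.norm_mono hp fun i => by
              simpa [toNorm, abs_of_nonneg (norm_nonneg G)] using
                (G i).le_of_opNorm_le (norm_apply_le_norm top_ne_zero G i) (ξ i)
        _ = ‖G‖ * ‖ξ‖ := by rw [norm_smul, norm_norm, norm_toNorm]

@[simp]
theorem mulCLM_apply (G : lp (fun i => E i →L[𝕜] E i) ∞) (ξ : lp E p) (i : ι) :
    mulCLM p G ξ i = G i (ξ i) := rfl

theorem norm_mulCLM_le (G : lp (fun i => E i →L[𝕜] E i) ∞) : ‖mulCLM p G‖ ≤ ‖G‖ :=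
  LinearMap.mkContinuous_norm_le _ (norm_nonneg G) _

theorem mulCLM_sub (G H : lp (fun i => E i →L[𝕜] E i) ∞) :
    mulCLM p (G - H) = mulCLM p G - mulCLM p H := rfl

theorem mulCLM_mul (G H : lp (fun i => E i →L[𝕜] E i) ∞) :
    mulCLM p (G * H) = mulCLM p G ∘L mulCLM p H := rfl

variable [∀ i, ProperSpace (E i)]

theorem isCompactOperator_mulCLM_of_support_subset {G : lp (fun i => E i →L[𝕜] E i) ∞}
    {s : Finset ι} (hG : ∀ i ∉ s, G i = 0) : IsCompactOperator (mulCLM p G) := by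
  classical
  have hsum : mulCLM p G =
      ∑ i ∈ s, (singleContinuousLinearMap 𝕜 E p i ∘L G i) ∘L evalCLM 𝕜 E p i := by
    ext ξ j
    simp only [mulCLM_apply, FunLike.coe_sum, Finset.sum_apply, ContinuousLinearMap.comp_apply,
      coeFn_sum, singleContinuousLinearMap_apply, lp.single_apply, Finset.sum_pi_single]
    split_ifs with hj
    · rfl
    · simp [hG j hj]
  rw [hsum]
  exact Submodule.sum_mem (compactOperator _ _ _) fun i _ =>
    (isCompactOperator_of_locallyCompactSpace_rng
      (singleContinuousLinearMap 𝕜 E p i ∘L G i)).comp_clm (evalCLM 𝕜 E p i)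

theorem isCompactOperator_mulCLM {G : lp (fun i => E i →L[𝕜] E i) ∞}
    (hG : Tendsto (fun i => ‖G i‖) cofinite (𝓝 0)) : IsCompactOperator (mulCLM p G) := by
  classical
  let trunc (s : Finset ι) : lp (fun i => E i →L[𝕜] E i) ∞ :=
    ⟨fun i => if i ∈ s then G i else 0, (lp.memℓp G).mono' fun i => by split_ifs <;> simp⟩
  have htrunc : Tendsto trunc atTop (𝓝 G) := by
    refine Metric.tendsto_nhds.2 fun ε hε => ?_
    have hfin := eventually_cofinite.1 (hG.eventually (gt_mem_nhds (half_pos hε)))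
    filter_upwards [eventually_ge_atTop hfin.toFinset] with s hs
    rw [dist_eq_norm]
    refine (lp.norm_le_of_forall_le (half_pos hε).le fun i => ?_).trans_lt (half_lt_self hε)
    change ‖(if i ∈ s then G i else 0) - G i‖ ≤ ε / 2
    by_cases hi : i ∈ s
    · simp [hi, (half_pos hε).le]
    · have hGi : ‖G i‖ < ε / 2 := by_contra fun h => hi (hs (hfin.mem_toFinset.2 h))
      simpa [hi] using hGi.le
  refine isCompactOperator_of_tendsto (l := atTop) (F := fun s => mulCLM p (trunc s)) ?_
    (Eventually.of_forall fun s => isCompactOperator_mulCLM_of_support_subset (s := s)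
      fun i hi => if_neg hi)
  rw [tendsto_iff_norm_sub_tendsto_zero] at htrunc ⊢
  refine squeeze_zero (fun _ => norm_nonneg _) (fun s => ?_) htrunc
  rw [← mulCLM_sub]
  exact norm_mulCLM_le _

theorem isCompactOperator_mulCLM_sub_id {G : lp (fun i => E i →L[𝕜] E i) ∞}
    (hG : ∀ᶠ i in cofinite, G i = 1) :
    IsCompactOperator (mulCLM p G - ContinuousLinearMap.id 𝕜 (lp E p)) := by
  have hfin : {i | G i - 1 ≠ 0}.Finite := by simpa [sub_eq_zero] using hG
  let D : lp (fun i => E i →L[𝕜] E i) ∞ :=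
    ⟨fun i => G i - 1, (memℓp_zero hfin).of_exponent_ge (p := ∞) bot_le⟩
  have hD : mulCLM p G - ContinuousLinearMap.id 𝕜 (lp E p) = mulCLM p D := rfl
  rw [hD]
  exact isCompactOperator_mulCLM_of_support_subset (s := hfin.toFinset) fun i hi => by
    simpa using hi

theorem isCompactOperator_mulCLM_comp_sub_comp_mulCLM {E : Type*} [NormedAddCommGroup E]
    [NormedSpace 𝕜 E] [ProperSpace E] {G : lp (fun _ : ι => E →L[𝕜] E) ∞}
    {T : lp (fun _ : ι => E) p →L[𝕜] lp (fun _ : ι => E) p} {σ : ι → ι}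
    (hT : ∀ ξ i, T ξ i = ξ (σ i)) (hG : Tendsto (fun i => ‖G i - G (σ i)‖) cofinite (𝓝 0)) :
    IsCompactOperator (mulCLM p G ∘L T - T ∘L mulCLM p G) := by
  have hGσ : Memℓp (fun i => G (σ i)) ∞ :=
    memℓp_infty <| (lp.memℓp G).bddAbove.mono (Set.range_comp_subset_range σ fun i => ‖G i‖)
  let D : lp (fun _ : ι => E →L[𝕜] E) ∞ := ⟨fun i => G i - G (σ i), (lp.memℓp G).sub hGσ⟩
  have hD : mulCLM p G ∘L T - T ∘L mulCLM p G = mulCLM p D ∘L T := by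
    ext ξ i
    simp only [sub_apply, ContinuousLinearMap.comp_apply, coeFn_sub, Pi.sub_apply, mulCLM_apply,
      hT]
    rfl
  rw [hD]
  exact (isCompactOperator_mulCLM (G := D) (hG.congr fun i => rfl)).comp_clm T

end lp

/-- If `F : π → Matrix (Fin n) (Fin n) ℂ` is bounded and satisfies conditions
(1.4) and (1.5), then the pair `(L, Φ_F)` — the left regular representation together with
the multiplication operator — is a Fredholm representation of `π`: `Φ_F` is invertible
modulo compact operators and commutes with each `L_h` modulo compact operators. -/
theorem pair_is_fredholm_representation
    {π : Type*} [Group π] {n : ℕ}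
    (F : π → Matrix (Fin n) (Fin n) ℂ)
    (hbd : ∃ C : ℝ, ∀ g : π, ‖F g‖ ≤ C)
    (h14 : ∃ (S : Finset π) (C : ℝ), 0 < C ∧
      ∀ g ∉ S, IsUnit (F g) ∧ ‖(F g)⁻¹‖ ≤ C)
    (h15 : ∀ h : π, ∀ ε : ℝ, 0 < ε → {g : π | ε ≤ ‖F (h * g) - F g‖}.Finite)
    (Φ : lp (fun _ : π => EuclideanSpace ℂ (Fin n)) 2 →L[ℂ]
         lp (fun _ : π => EuclideanSpace ℂ (Fin n)) 2)
    (hΦ : ∀ (ξ : lp (fun _ : π => EuclideanSpace ℂ (Fin n)) 2) (g : π),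
      Φ ξ g = (F g).mulVec (ξ g))
    (L : π → (lp (fun _ : π => EuclideanSpace ℂ (Fin n)) 2 →L[ℂ]
              lp (fun _ : π => EuclideanSpace ℂ (Fin n)) 2))
    (hL : ∀ (h : π) (ξ : lp (fun _ : π => EuclideanSpace ℂ (Fin n)) 2) (g : π),
      L h ξ g = ξ (h⁻¹ * g)) :
    (∃ Ψ : lp (fun _ : π => EuclideanSpace ℂ (Fin n)) 2 →L[ℂ]
           lp (fun _ : π => EuclideanSpace ℂ (Fin n)) 2,
      IsCompactOperator
        (Φ ∘L Ψ - ContinuousLinearMap.id ℂ (lp (fun _ : π => EuclideanSpace ℂ (Fin n)) 2)) ∧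
      IsCompactOperator
        (Ψ ∘L Φ - ContinuousLinearMap.id ℂ (lp (fun _ : π => EuclideanSpace ℂ (Fin n)) 2))) ∧
    (∀ h : π, IsCompactOperator (Φ ∘L L h - L h ∘L Φ)) := by
  obtain ⟨C, hC⟩ := hbd
  let e := Matrix.toEuclideanCLM (n := Fin n) (𝕜 := ℂ)
  let A : lp (fun _ : π => EuclideanSpace ℂ (Fin n) →L[ℂ] EuclideanSpace ℂ (Fin n)) ∞ :=
    ⟨fun g => e (F g), memℓp_infty ⟨C, by rintro _ ⟨g, rfl⟩; exact hC g⟩⟩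
  obtain rfl : Φ = lp.mulCLM 2 A :=
    ContinuousLinearMap.ext fun ξ => lp.ext <| funext fun g => WithLp.ofLp_injective 2 (hΦ ξ g)
  refine ⟨?_, fun h => lp.isCompactOperator_mulCLM_comp_sub_comp_mulCLM (hL h) ?_⟩
  · obtain ⟨S, C', -, hS⟩ := h14
    have hinv : ∀ᶠ g in cofinite, IsUnit (F g) ∧ ‖(F g)⁻¹‖ ≤ C' :=
      S.eventually_cofinite_notMem.mono hS
    let B : lp (fun _ : π => EuclideanSpace ℂ (Fin n) →L[ℂ] EuclideanSpace ℂ (Fin n)) ∞ :=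
      ⟨fun g => e (F g)⁻¹, memℓp_infty
        (isBoundedUnder_of_eventually_le (hinv.mono fun _ => And.right)).bddAbove_range_of_cofinite⟩
    refine ⟨lp.mulCLM 2 B, ?_, ?_⟩ <;> rw [← lp.mulCLM_mul] <;>
      refine lp.isCompactOperator_mulCLM_sub_id (hinv.mono fun g hg => ?_) <;>
      simp only [lp.infty_coeFn_mul, Pi.mul_apply, A, B, ← map_mul]
    · rw [(F g).mul_nonsing_inv ((F g).isUnit_iff_isUnit_det.1 hg.1), map_one]
    · rw [(F g).nonsing_inv_mul ((F g).isUnit_iff_isUnit_det.1 hg.1), map_one]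
  · have hA : ∀ g, ‖F (h * (h⁻¹ * g)) - F (h⁻¹ * g)‖ = ‖A g - A (h⁻¹ * g)‖ := fun g => by
      rw [mul_inv_cancel_left, ← Matrix.l2_opNorm_toEuclideanCLM, map_sub]
    exact ((tendsto_norm_cofinite_nhds_zero_iff.2 (h15 h)).comp
      (mul_right_injective h⁻¹).tendsto_cofinite).congr hA
end

section
/- Assume F : π → Matrix (Fin n) (Fin n) ℂ is bounded and satisfies condition (1.5): for every h ∈ π and every ε > 0 the set {g ∈ π | ‖F (h*g) − F g‖ ≥ ε} is finite. Then for every h ∈ π the operator L_h ∘ Φ_F ∘ L_h⁻¹ − Φ_F is a compact operator on H = ℓ²(π; ℂⁿ); equivalently, each conjugate T_h Φ T_h⁻¹ agrees with Φ_F modulo compact operators. -/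
/-! The difference `L_h Φ_F L_h⁻¹ - Φ_F` is again a multiplication operator, with symbol
`g ↦ F (h⁻¹ g) - F g`, and (1.5) says exactly that this symbol tends to zero at infinity.
A block-diagonal operator on `ℓᵖ` whose finite-dimensional blocks tend to zero in norm is the
operator-norm limit of its finite truncations, which factor through finitely many
finite-dimensional blocks; hence it is compact. -/

open scoped Matrix.Norms.L2Operator

open Filter Topology

theorem tendsto_cofinite_zero_iff_finite_setOf_le_norm {ι E : Type*} [SeminormedAddCommGroup E]
    {f : ι → E} : Tendsto f cofinite (𝓝 0) ↔ ∀ ε > 0, {i | ε ≤ ‖f i‖}.Finite := by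
  simp only [NormedAddGroup.tendsto_nhds_zero, eventually_cofinite, not_lt]

namespace lp

variable {𝕜 ι : Type*} {E F : ι → Type*} [RCLike 𝕜]
  [∀ i, NormedAddCommGroup (E i)] [∀ i, NormedSpace 𝕜 (E i)]
  [∀ i, NormedAddCommGroup (F i)] [∀ i, NormedSpace 𝕜 (F i)]
  {p : ENNReal} [Fact (1 ≤ p)]

section Truncation

variable [DecidableEq ι]

variable (p) in
noncomputable def truncatedDiagonal (A : ∀ i, E i →L[𝕜] F i) (s : Finset ι) :
    lp E p →L[𝕜] lp F p :=
  ∑ i ∈ s, singleContinuousLinearMap 𝕜 F p i ∘L A i ∘L evalCLM 𝕜 E p i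

theorem truncatedDiagonal_apply (A : ∀ i, E i →L[𝕜] F i) (s : Finset ι) (ξ : lp E p) (i : ι) :
    truncatedDiagonal p A s ξ i = if i ∈ s then A i (ξ i) else 0 := by
  simp only [truncatedDiagonal, sum_apply, lp.coeFn_sum, Finset.sum_apply,
    ContinuousLinearMap.comp_apply, singleContinuousLinearMap_apply, lp.single_apply]
  exact Finset.sum_pi_single ..

theorem isCompactOperator_truncatedDiagonal [∀ i, ProperSpace (F i)] (A : ∀ i, E i →L[𝕜] F i)
    (s : Finset ι) : IsCompactOperator (truncatedDiagonal p A s) :=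
  Finset.sum_induction _ (fun T : lp E p →L[𝕜] lp F p ↦ IsCompactOperator T)
    (fun _ _ ↦ IsCompactOperator.add) isCompactOperator_zero fun i _ ↦
      (isCompactOperator_of_locallyCompactSpace_dom (A i ∘L evalCLM 𝕜 E p i)).clm_comp
        (singleContinuousLinearMap 𝕜 F p i)

variable {T : lp E p →L[𝕜] lp F p} {A : ∀ i, E i →L[𝕜] F i}

theorem norm_sub_truncatedDiagonal_le (hT : ∀ ξ i, T ξ i = A i (ξ i)) {s : Finset ι} {C : ℝ}
    (hC : 0 ≤ C) (hA : ∀ i ∉ s, ‖A i‖ ≤ C) : ‖T - truncatedDiagonal p A s‖ ≤ C := by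
  have hp : p ≠ 0 := (zero_lt_one.trans_le Fact.out).ne'
  have hCnorm : ‖(C : 𝕜)‖ = C := by simp [hC]
  refine ContinuousLinearMap.opNorm_le_bound _ hC fun ξ ↦ ?_
  rw [← hCnorm, ← norm_const_smul hp]
  refine norm_mono hp fun i ↦ ?_
  by_cases hi : i ∈ s
  · simp [truncatedDiagonal_apply, hT, hi]
  · simp only [sub_apply, lp.coeFn_sub, Pi.sub_apply, truncatedDiagonal_apply, hi, hT, if_false,
      sub_zero, lp.coeFn_smul, Pi.smul_apply, norm_smul, hCnorm]
    exact (A i).le_of_opNorm_le (hA i hi) _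

theorem tendsto_truncatedDiagonal (hT : ∀ ξ i, T ξ i = A i (ξ i))
    (hA : Tendsto (fun i ↦ ‖A i‖) cofinite (𝓝 0)) :
    Tendsto (truncatedDiagonal p A) atTop (𝓝 T) := by
  rw [tendsto_iff_norm_sub_tendsto_zero, NormedAddGroup.tendsto_nhds_zero]
  intro ε hε
  have hsmall := eventually_cofinite.1 (hA.eventually (ge_mem_nhds (half_pos hε)))
  filter_upwards [eventually_ge_atTop hsmall.toFinset] with s hs
  rw [norm_norm, norm_sub_rev]
  refine (norm_sub_truncatedDiagonal_le hT (half_pos hε).le fun i hi ↦ ?_).trans_lt (half_lt_self hε)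
  exact not_not.1 fun h ↦ hi (hs (hsmall.mem_toFinset.2 h))

end Truncation

theorem isCompactOperator_of_diagonal_tendsto_zero [∀ i, ProperSpace (F i)]
    {T : lp E p →L[𝕜] lp F p} {A : ∀ i, E i →L[𝕜] F i} (hT : ∀ ξ i, T ξ i = A i (ξ i))
    (hA : Tendsto (fun i ↦ ‖A i‖) cofinite (𝓝 0)) :
    IsCompactOperator T := by
  classical
  exact isCompactOperator_of_tendsto (tendsto_truncatedDiagonal hT hA)
    (Eventually.of_forall (isCompactOperator_truncatedDiagonal A))

end lp

theorem conjugate_multiplication_operator_compact_difference_general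
    {π : Type*} [Group π] {n : ℕ}
    (F : π → Matrix (Fin n) (Fin n) ℂ)
    (h15 : ∀ h : π, ∀ ε : ℝ, 0 < ε → {g : π | ε ≤ ‖F (h * g) - F g‖}.Finite)
    (Φ : lp (fun _ : π => EuclideanSpace ℂ (Fin n)) 2 →L[ℂ]
         lp (fun _ : π => EuclideanSpace ℂ (Fin n)) 2)
    (hΦ : ∀ (ξ : lp (fun _ : π => EuclideanSpace ℂ (Fin n)) 2) (g : π),
      Φ ξ g = (F g).mulVec (ξ g))
    (L : π → (lp (fun _ : π => EuclideanSpace ℂ (Fin n)) 2 →L[ℂ]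
              lp (fun _ : π => EuclideanSpace ℂ (Fin n)) 2))
    (hL : ∀ (h : π) (ξ : lp (fun _ : π => EuclideanSpace ℂ (Fin n)) 2) (g : π),
      L h ξ g = ξ (h⁻¹ * g)) :
    ∀ h : π, IsCompactOperator (L h ∘L Φ ∘L L h⁻¹ - Φ) := by
  intro h
  set A : π → EuclideanSpace ℂ (Fin n) →L[ℂ] EuclideanSpace ℂ (Fin n) :=
    fun g ↦ Matrix.toEuclideanCLM (𝕜 := ℂ) (n := Fin n) (F (h⁻¹ * g) - F g)
  have hdiag : ∀ ξ g, (L h ∘L Φ ∘L L h⁻¹ - Φ) ξ g = A g (ξ g) := by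
    intro ξ g
    ext j
    simp [A, hL, hΦ]
  have hA : Tendsto (fun g ↦ ‖A g‖) cofinite (𝓝 0) := by
    simp only [A, Matrix.l2_opNorm_toEuclideanCLM]
    exact tendsto_zero_iff_norm_tendsto_zero.1
      (tendsto_cofinite_zero_iff_finite_setOf_le_norm.2 (h15 h⁻¹))
  exact lp.isCompactOperator_of_diagonal_tendsto_zero hdiag hA

/-- If `F : π → Matrix (Fin n) (Fin n) ℂ` is bounded and satisfies condition
(1.5), then for every `h ∈ π` the conjugate `L_h ∘ Φ_F ∘ L_{h⁻¹}` of the multiplication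
operator agrees with `Φ_F` modulo compact operators. -/
theorem conjugate_multiplication_operator_compact_difference
    {π : Type*} [Group π] {n : ℕ}
    (F : π → Matrix (Fin n) (Fin n) ℂ)
    (hbd : ∃ C : ℝ, ∀ g : π, ‖F g‖ ≤ C)
    (h15 : ∀ h : π, ∀ ε : ℝ, 0 < ε → {g : π | ε ≤ ‖F (h * g) - F g‖}.Finite)
    (Φ : lp (fun _ : π => EuclideanSpace ℂ (Fin n)) 2 →L[ℂ]
         lp (fun _ : π => EuclideanSpace ℂ (Fin n)) 2)
    (hΦ : ∀ (ξ : lp (fun _ : π => EuclideanSpace ℂ (Fin n)) 2) (g : π),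
      Φ ξ g = (F g).mulVec (ξ g))
    (L : π → (lp (fun _ : π => EuclideanSpace ℂ (Fin n)) 2 →L[ℂ]
              lp (fun _ : π => EuclideanSpace ℂ (Fin n)) 2))
    (hL : ∀ (h : π) (ξ : lp (fun _ : π => EuclideanSpace ℂ (Fin n)) 2) (g : π),
      L h ξ g = ξ (h⁻¹ * g)) :
    ∀ h : π, IsCompactOperator (L h ∘L Φ ∘L L h⁻¹ - Φ) :=
  conjugate_multiplication_operator_compact_difference_general F h15 Φ hΦ L hL
end

section
/- Assume F : π → Matrix (Fin n) (Fin n) ℂ is bounded and satisfies condition (1.4) (there exist a finite set S ⊆ π and C > 0 such that for every g ∉ S the matrix F g is invertible and ‖(F g)⁻¹‖ ≤ C) and condition (1.5) (for every h ∈ π and ε > 0 the set {g ∈ π | ‖F (h*g) − F g‖ ≥ ε} is finite). Then for every m ∈ ℕ, every h₀, …, h_m ∈ π, and every λ₀, …, λ_m ∈ ℝ with λ_k ≥ 0 and Σ_k λ_k = 1, the convex combination Φ_x = Σ_{k=0}^{m} λ_k • (L_{h_k} ∘ Φ_F ∘ L_{h_k}⁻¹) differs from Φ_F by a compact operator, and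 consequently Φ_x is invertible modulo compact operators (a Fredholm operator). -/
/-!
Conjugating the multiplication operator `Φ = Φ_F` by the translation `L_h` gives the
multiplication operator by `g ↦ F (h⁻¹ g)`, so by (1.5) each `L_h Φ L_h⁻¹ - Φ` is multiplication
by a matrix function vanishing at infinity. Such an operator is the norm limit of its
truncations to finite sets of coordinates, which have finite rank, hence it is compact. As
`∑ λ_k = 1`, `Φ_x - Φ = ∑ λ_k (L_{h_k} Φ L_{h_k}⁻¹ - Φ)` is compact too. By (1.4), multiplication
by `F⁻¹` (set to `0` on the finite exceptional set) inverts `Φ` up to multiplication operators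
supported on a finite set, i.e. up to compact operators, and an inverse modulo compacts of `Φ`
is one of every compact perturbation of `Φ`, in particular of `Φ_x`.
-/

open scoped ENNReal
open scoped Matrix.Norms.L2Operator

section Parametrix

variable {𝕜 X Y : Type*} [NontriviallyNormedField 𝕜] [NormedAddCommGroup X] [NormedSpace 𝕜 X]
  [NormedAddCommGroup Y] [NormedSpace 𝕜 Y]

def IsParametrix (T : X →L[𝕜] Y) (Ψ : Y →L[𝕜] X) : Prop :=
  IsCompactOperator (T ∘L Ψ - ContinuousLinearMap.id 𝕜 Y) ∧
    IsCompactOperator (Ψ ∘L T - ContinuousLinearMap.id 𝕜 X)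

theorem IsParametrix.of_isCompactOperator_sub {T T' : X →L[𝕜] Y} {Ψ : Y →L[𝕜] X}
    (hΨ : IsParametrix T Ψ) (hT' : IsCompactOperator (T' - T)) : IsParametrix T' Ψ := by
  have hright : T' ∘L Ψ - ContinuousLinearMap.id 𝕜 Y =
      (T' - T) ∘L Ψ + (T ∘L Ψ - ContinuousLinearMap.id 𝕜 Y) := by
    rw [ContinuousLinearMap.sub_comp]; abel
  have hleft : Ψ ∘L T' - ContinuousLinearMap.id 𝕜 X =
      Ψ ∘L (T' - T) + (Ψ ∘L T - ContinuousLinearMap.id 𝕜 X) := by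
    rw [ContinuousLinearMap.comp_sub]; abel
  rw [IsParametrix, hright, hleft]
  exact ⟨(hT'.comp_clm Ψ).add hΨ.1, (hT'.clm_comp Ψ).add hΨ.2⟩

theorem isCompactOperator_sum_smul_sub {ι : Type*} (s : Finset ι) {w : ι → 𝕜}
    (hw : ∑ i ∈ s, w i = 1) {T : ι → X →L[𝕜] Y} {T₀ : X →L[𝕜] Y}
    (hT : ∀ i ∈ s, IsCompactOperator (T i - T₀)) :
    IsCompactOperator (∑ i ∈ s, w i • T i - T₀) := by
  have hsum : ∑ i ∈ s, w i • T i - T₀ = ∑ i ∈ s, w i • (T i - T₀) := by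
    simp only [smul_sub, Finset.sum_sub_distrib, ← Finset.sum_smul, hw, one_smul]
  rw [hsum]
  exact Submodule.sum_mem (compactOperator _ _ _) fun i hi => Submodule.smul_mem _ _ (hT i hi)

end Parametrix

namespace lp

variable {𝕜 ι : Type*} [NontriviallyNormedField 𝕜] {E F : ι → Type*}
  [∀ i, NormedAddCommGroup (E i)] [∀ i, NormedSpace 𝕜 (E i)]
  [∀ i, NormedAddCommGroup (F i)] [∀ i, NormedSpace 𝕜 (F i)]
  {p : ℝ≥0∞} [Fact (1 ≤ p)]

theorem norm_le_mul_norm_of_apply_le {x : lp E p} {y : lp F p} {C : ℝ} (hC : 0 ≤ C)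
    (h : ∀ i, ‖x i‖ ≤ C * ‖y i‖) : ‖x‖ ≤ C * ‖y‖ := by
  have hp : p ≠ 0 := (zero_lt_one.trans_le Fact.out).ne'
  let z : lp (fun _ : ι => ℝ) p := ⟨fun i => ‖y i‖, (lp.memℓp y).norm⟩
  calc ‖x‖ ≤ ‖C • z‖ := norm_mono hp fun i => by simpa [z, abs_of_nonneg hC] using h i
    _ = C * ‖z‖ := by rw [norm_const_smul hp, Real.norm_of_nonneg hC]
    _ ≤ C * ‖y‖ := by gcongr; exact norm_mono hp fun i => (norm_norm _).le

theorem opNorm_le_of_apply_le {T : lp E p →L[𝕜] lp F p} {C : ℝ} (hC : 0 ≤ C)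
    (hT : ∀ ξ i, ‖T ξ i‖ ≤ C * ‖ξ i‖) : ‖T‖ ≤ C :=
  T.opNorm_le_bound hC fun ξ => norm_le_mul_norm_of_apply_le hC (hT ξ)

theorem _root_.BddAbove.exists_norm_apply_le_mul (A : ∀ i, E i →L[𝕜] F i)
    (hA : BddAbove (Set.range fun i => ‖A i‖)) :
    ∃ C, 0 ≤ C ∧ ∀ i x, ‖A i x‖ ≤ C * ‖x‖ := by
  obtain ⟨C, hC0, hC⟩ := hA.exists_ge 0
  exact ⟨C, hC0, fun i => (A i).le_of_opNorm_le (hC _ ⟨i, rfl⟩)⟩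

noncomputable def diagonal (A : ∀ i, E i →L[𝕜] F i) (hA : BddAbove (Set.range fun i => ‖A i‖)) :
    lp E p →L[𝕜] lp F p :=
  LinearMap.mkContinuousOfExistsBound
    { toFun ξ := ⟨fun i => A i (ξ i),
        have ⟨C, _, hC⟩ := hA.exists_norm_apply_le_mul
        ((lp.memℓp ξ).norm.const_mul C).mono fun i => hC i (ξ i)⟩
      map_add' ξ η := lp.ext <| funext fun i => map_add (A i) (ξ i) (η i)
      map_smul' c ξ := lp.ext <| funext fun i => map_smul (A i) c (ξ i) }
    (have ⟨C, hC0, hC⟩ := hA.exists_norm_apply_le_mul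
     ⟨C, fun ξ => norm_le_mul_norm_of_apply_le hC0 fun i => hC i (ξ i)⟩)

@[simp]
theorem diagonal_apply (A : ∀ i, E i →L[𝕜] F i) (hA : BddAbove (Set.range fun i => ‖A i‖))
    (ξ : lp E p) (i : ι) : diagonal A hA ξ i = A i (ξ i) := rfl

variable (𝕜 E p) in
noncomputable def projFinset [DecidableEq ι] (s : Finset ι) : lp E p →L[𝕜] lp E p :=
  ∑ i ∈ s, singleContinuousLinearMap 𝕜 E p i ∘L evalCLM 𝕜 E p i

theorem projFinset_apply [DecidableEq ι] (s : Finset ι) (ξ : lp E p) (i : ι) :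
    projFinset 𝕜 E p s ξ i = if i ∈ s then ξ i else 0 := by
  rw [projFinset, _root_.sum_apply, coeFn_sum, Finset.sum_apply]
  simp only [ContinuousLinearMap.comp_apply, singleContinuousLinearMap_apply, lp.coeFn_single]
  exact Finset.sum_pi_single i (fun j => ξ j) s

theorem isCompactOperator_projFinset [DecidableEq ι] [∀ i, LocallyCompactSpace (E i)]
    (s : Finset ι) : IsCompactOperator (projFinset 𝕜 E p s) :=
  Submodule.sum_mem (compactOperator _ _ _) fun i _ =>
    ((isCompactOperator_of_locallyCompactSpace_rng (singleContinuousLinearMap 𝕜 E p i)).comp_clm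
      (evalCLM 𝕜 E p i) :)

theorem isCompactOperator_of_apply_eq [∀ i, LocallyCompactSpace (E i)]
    [∀ i, CompleteSpace (F i)] {T : lp E p →L[𝕜] lp F p} {A : ∀ i, E i →L[𝕜] F i}
    (hT : ∀ ξ i, T ξ i = A i (ξ i)) (hA : ∀ ε : ℝ, 0 < ε → {i | ε ≤ ‖A i‖}.Finite) :
    IsCompactOperator T := by
  classical
  refine isClosed_setOfPred_isCompactOperator.closure_subset
    (Metric.mem_closure_iff.2 fun ε hε => ?_)
  set s := (hA (ε / 2) (half_pos hε)).toFinset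
  refine ⟨T ∘L projFinset 𝕜 E p s, (isCompactOperator_projFinset s).clm_comp T, ?_⟩
  have hcoord (ξ : lp E p) (i : ι) : ‖(T - T ∘L projFinset 𝕜 E p s) ξ i‖ ≤ ε / 2 * ‖ξ i‖ := by
    by_cases hi : i ∈ s
    · have : 0 ≤ ε / 2 * ‖ξ i‖ := by positivity
      simpa [hT, projFinset_apply, hi] using this
    · have hAi : ‖A i‖ < ε / 2 := by simpa [s] using hi
      simpa [hT, projFinset_apply, hi] using (A i).le_of_opNorm_le hAi.le (ξ i)
  rw [dist_eq_norm]
  exact (opNorm_le_of_apply_le (half_pos hε).le hcoord).trans_lt (half_lt_self hε)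

theorem exists_isParametrix_of_apply_eq [∀ i, LocallyCompactSpace (E i)]
    [∀ i, CompleteSpace (E i)] [∀ i, LocallyCompactSpace (F i)] [∀ i, CompleteSpace (F i)]
    {T : lp E p →L[𝕜] lp F p} {A : ∀ i, E i →L[𝕜] F i} (hT : ∀ ξ i, T ξ i = A i (ξ i))
    (S : Finset ι) {B : ∀ i, F i →L[𝕜] E i} {C : ℝ} (hB : ∀ i ∉ S, ‖B i‖ ≤ C)
    (hAB : ∀ i ∉ S,
      A i ∘L B i = ContinuousLinearMap.id 𝕜 (F i) ∧ B i ∘L A i = ContinuousLinearMap.id 𝕜 (E i)) :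
    ∃ Ψ, IsParametrix T Ψ := by
  classical
  let B' i := if i ∈ S then 0 else B i
  have hB' : BddAbove (Set.range fun i => ‖B' i‖) := by
    refine ⟨max C 0, ?_⟩
    rintro _ ⟨i, rfl⟩
    by_cases hi : i ∈ S <;> simp [B', hi, hB]
  have hfin (f : ι → ℝ) (hf : ∀ i ∉ S, f i = 0) (ε : ℝ) (hε : 0 < ε) : {i | ε ≤ f i}.Finite :=
    S.finite_toSet.subset fun i hi => by_contra fun hiS => by
      simp only [Set.mem_ofPred_eq, hf i hiS] at hi; linarith
  refine ⟨diagonal B' hB',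
    isCompactOperator_of_apply_eq (A := fun i => A i ∘L B' i - ContinuousLinearMap.id 𝕜 (F i))
      (fun ξ i => by simp [hT]) (hfin (fun i => ‖A i ∘L B' i - ContinuousLinearMap.id 𝕜 (F i)‖)
        fun i hi => by simp [B', hi, (hAB i hi).1]),
    isCompactOperator_of_apply_eq (A := fun i => B' i ∘L A i - ContinuousLinearMap.id 𝕜 (E i))
      (fun ξ i => by simp [hT]) (hfin (fun i => ‖B' i ∘L A i - ContinuousLinearMap.id 𝕜 (E i)‖)
        fun i hi => by simp [B', hi, (hAB i hi).2])⟩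

variable {π E : Type*} [Group π] [NormedAddCommGroup E] [NormedSpace 𝕜 E]

theorem translate_conj_apply {L : π → lp (fun _ : π => E) p →L[𝕜] lp (fun _ : π => E) p}
    (hL : ∀ h ξ g, L h ξ g = ξ (h⁻¹ * g)) {T : lp (fun _ : π => E) p →L[𝕜] lp (fun _ : π => E) p}
    {A : π → E →L[𝕜] E} (hT : ∀ ξ g, T ξ g = A g (ξ g)) (h : π) (ξ : lp (fun _ : π => E) p)
    (g : π) : (L h ∘L T ∘L L h⁻¹) ξ g = A (h⁻¹ * g) (ξ g) := by
  simp [hL, hT]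

end lp

theorem convex_combination_fredholm_general
    {π : Type*} [Group π] {n : ℕ}
    (F : π → Matrix (Fin n) (Fin n) ℂ)
    (h14 : ∃ (S : Finset π) (C : ℝ), 0 < C ∧
      ∀ g ∉ S, IsUnit (F g) ∧ ‖(F g)⁻¹‖ ≤ C)
    (h15 : ∀ h : π, ∀ ε : ℝ, 0 < ε → {g : π | ε ≤ ‖F (h * g) - F g‖}.Finite)
    (Φ : lp (fun _ : π => EuclideanSpace ℂ (Fin n)) 2 →L[ℂ]
         lp (fun _ : π => EuclideanSpace ℂ (Fin n)) 2)
    (hΦ : ∀ (ξ : lp (fun _ : π => EuclideanSpace ℂ (Fin n)) 2) (g : π),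
      Φ ξ g = (F g).mulVec (ξ g))
    (L : π → (lp (fun _ : π => EuclideanSpace ℂ (Fin n)) 2 →L[ℂ]
              lp (fun _ : π => EuclideanSpace ℂ (Fin n)) 2))
    (hL : ∀ (h : π) (ξ : lp (fun _ : π => EuclideanSpace ℂ (Fin n)) 2) (g : π),
      L h ξ g = ξ (h⁻¹ * g)) :
    ∀ (m : ℕ) (h : Fin (m + 1) → π) (lam : Fin (m + 1) → ℝ),
      (∀ k, 0 ≤ lam k) → (∑ k, lam k = 1) →
      IsCompactOperator
        ((∑ k, (lam k : ℂ) • (L (h k) ∘L Φ ∘L L (h k)⁻¹)) - Φ) ∧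
      ∃ Ψ : lp (fun _ : π => EuclideanSpace ℂ (Fin n)) 2 →L[ℂ]
            lp (fun _ : π => EuclideanSpace ℂ (Fin n)) 2,
        IsCompactOperator
          ((∑ k, (lam k : ℂ) • (L (h k) ∘L Φ ∘L L (h k)⁻¹)) ∘L Ψ -
            ContinuousLinearMap.id ℂ (lp (fun _ : π => EuclideanSpace ℂ (Fin n)) 2)) ∧
        IsCompactOperator
          (Ψ ∘L (∑ k, (lam k : ℂ) • (L (h k) ∘L Φ ∘L L (h k)⁻¹)) -
            ContinuousLinearMap.id ℂ (lp (fun _ : π => EuclideanSpace ℂ (Fin n)) 2)) := by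
  intro m h lam _ hsum
  let M := Matrix.toEuclideanCLM (n := Fin n) (𝕜 := ℂ)
  have hΦ' (ξ : lp (fun _ : π => EuclideanSpace ℂ (Fin n)) 2) (g : π) : Φ ξ g = M (F g) (ξ g) :=
    WithLp.ofLp_injective 2 (hΦ ξ g)
  have hconj (k : Fin (m + 1)) : IsCompactOperator (L (h k) ∘L Φ ∘L L (h k)⁻¹ - Φ) :=
    lp.isCompactOperator_of_apply_eq (A := fun g => M (F ((h k)⁻¹ * g) - F g))
      (fun ξ g => by
        rw [sub_apply, lp.coeFn_sub, Pi.sub_apply, lp.translate_conj_apply hL hΦ', hΦ', map_sub,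
          sub_apply]) (h15 (h k)⁻¹)
  have hsub := isCompactOperator_sum_smul_sub Finset.univ (w := fun k => (lam k : ℂ))
    (by exact_mod_cast hsum) fun k _ => hconj k
  obtain ⟨S, C, -, hS⟩ := h14
  have hinv (g : π) (hg : g ∉ S) :
      M (F g) ∘L M (F g)⁻¹ = ContinuousLinearMap.id ℂ _ ∧
      M (F g)⁻¹ ∘L M (F g) = ContinuousLinearMap.id ℂ _ := by
    have hdet := (Matrix.isUnit_iff_isUnit_det _).mp (hS g hg).1
    simp only [← ContinuousLinearMap.mul_def, ← map_mul, Matrix.mul_nonsing_inv _ hdet,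
      Matrix.nonsing_inv_mul _ hdet, map_one, ContinuousLinearMap.one_def, and_self]
  obtain ⟨Ψ, hΨ⟩ := lp.exists_isParametrix_of_apply_eq hΦ' S (fun g hg => (hS g hg).2) hinv
  exact ⟨hsub, Ψ, hΨ.of_isCompactOperator_sub hsub⟩

/-- If `F : π → Matrix (Fin n) (Fin n) ℂ` is bounded and satisfies conditions
(1.4) and (1.5), then every convex combination `Φ_x = Σ_k λ_k L_{h_k} Φ_F L_{h_k}⁻¹`
(a member of the equivariant family (1.9)) differs from `Φ_F` by a compact operator and
is invertible modulo compact operators, i.e. is a Fredholm operator. -/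
theorem convex_combination_fredholm
    {π : Type*} [Group π] {n : ℕ}
    (F : π → Matrix (Fin n) (Fin n) ℂ)
    (hbd : ∃ C : ℝ, ∀ g : π, ‖F g‖ ≤ C)
    (h14 : ∃ (S : Finset π) (C : ℝ), 0 < C ∧
      ∀ g ∉ S, IsUnit (F g) ∧ ‖(F g)⁻¹‖ ≤ C)
    (h15 : ∀ h : π, ∀ ε : ℝ, 0 < ε → {g : π | ε ≤ ‖F (h * g) - F g‖}.Finite)
    (Φ : lp (fun _ : π => EuclideanSpace ℂ (Fin n)) 2 →L[ℂ]
         lp (fun _ : π => EuclideanSpace ℂ (Fin n)) 2)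
    (hΦ : ∀ (ξ : lp (fun _ : π => EuclideanSpace ℂ (Fin n)) 2) (g : π),
      Φ ξ g = (F g).mulVec (ξ g))
    (L : π → (lp (fun _ : π => EuclideanSpace ℂ (Fin n)) 2 →L[ℂ]
              lp (fun _ : π => EuclideanSpace ℂ (Fin n)) 2))
    (hL : ∀ (h : π) (ξ : lp (fun _ : π => EuclideanSpace ℂ (Fin n)) 2) (g : π),
      L h ξ g = ξ (h⁻¹ * g)) :
    ∀ (m : ℕ) (h : Fin (m + 1) → π) (lam : Fin (m + 1) → ℝ),
      (∀ k, 0 ≤ lam k) → (∑ k, lam k = 1) →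
      IsCompactOperator
        ((∑ k, (lam k : ℂ) • (L (h k) ∘L Φ ∘L L (h k)⁻¹)) - Φ) ∧
      ∃ Ψ : lp (fun _ : π => EuclideanSpace ℂ (Fin n)) 2 →L[ℂ]
            lp (fun _ : π => EuclideanSpace ℂ (Fin n)) 2,
        IsCompactOperator
          ((∑ k, (lam k : ℂ) • (L (h k) ∘L Φ ∘L L (h k)⁻¹)) ∘L Ψ -
            ContinuousLinearMap.id ℂ (lp (fun _ : π => EuclideanSpace ℂ (Fin n)) 2)) ∧
        IsCompactOperator
          (Ψ ∘L (∑ k, (lam k : ℂ) • (L (h k) ∘L Φ ∘L L (h k)⁻¹)) -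
            ContinuousLinearMap.id ℂ (lp (fun _ : π => EuclideanSpace ℂ (Fin n)) 2)) :=
  convex_combination_fredholm_general F h14 h15 Φ hΦ L hL
end

section
/- Suppose the structure constants λ : ι → ι → ι → ℚ satisfy the unit condition λ^k_{i0} = λ^k_{0i} = δ^k_i, and suppose μ : ι → ι → ℚ satisfies the symmetry relation Σ_l μ^{il} λ^j_{lk} = Σ_l μ^{lj} λ^i_{kl} for all i, j, k, together with the normalization μ^{Nj} = μ^{jN} = δ^j_0 for all j. Then Σ_l μ^{il} λ^N_{lk} = δ^i_k for all i, k; that is, the matrix (μ^{ij}) is the inverse of the matrix (λ^N_{ij}). -/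
/-- If the structure constants `λ^k_{ij}` (written `lam k i j`) satisfy the
unit condition `λ^k_{i0} = λ^k_{0i} = δ^k_i`, and `μ` satisfies the symmetry relation
`Σ_l μ^{il} λ^j_{lk} = Σ_l μ^{lj} λ^i_{kl}` together with the normalization
`μ^{Nj} = μ^{jN} = δ^j_0`, then `Σ_l μ^{il} λ^N_{lk} = δ^i_k`, i.e. the matrix `(μ^{ij})`
is the inverse of the Poincaré pairing matrix `(λ^N_{ij})`. -/
theorem symmetric_class_mu_is_inverse_of_pairing
    {ι : Type*} [Fintype ι] [DecidableEq ι] [Nonempty ι]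
    (z N : ι)
    (lam : ι → ι → ι → ℚ)
    (hunit : ∀ i k : ι, lam k i z = (if k = i then 1 else 0) ∧
                        lam k z i = (if k = i then 1 else 0))
    (mu : ι → ι → ℚ)
    (hsymm : ∀ i j k : ι, ∑ l, mu i l * lam j l k = ∑ l, mu l j * lam i k l)
    (hnorm : ∀ j : ι, mu N j = (if j = z then 1 else 0) ∧
                      mu j N = (if j = z then 1 else 0)) :
    ∀ i k : ι, ∑ l, mu i l * lam N l k = (if i = k then 1 else 0) := by
  intro i k
  rw [hsymm i N k]
  have h : ∀ l, mu l N * lam i k l = (if l = z then 1 else 0) * lam i k l := by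
    intro l; rw [(hnorm l).2]
  simp only [h, ite_mul, one_mul, zero_mul, Finset.sum_ite_eq',
    Finset.mem_univ, if_true]
  exact (hunit k i).1
end

section
/- Suppose the structure constants λ : ι → ι → ι → ℚ satisfy the unit condition λ^k_{i0} = λ^k_{0i} = δ^k_i and the associativity condition Σ_l λ^l_{ij} λ^s_{lk} = Σ_l λ^s_{il} λ^l_{jk} for all i, j, k, s, and that the matrix (λ^N_{ij}) is symmetric (λ^N_{ij} = λ^N_{ji}) and invertible with two-sided inverse μ (i.e. Σ_l μ^{il} λ^N_{lk} = δ^i_k and Σ_l λ^N_{il} μ^{lk} = δ^k_i). Then μ satisfies the symmetry relation: Σ_l μ^{il} λ^j_{lk} = Σ_l μ^{lj} λ^i_{kl} for all i, j, k. -/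
/-- If the structure constants `λ^k_{ij}` (written `lam k i j`) satisfy the
unit condition and associativity, and the Poincaré pairing matrix `(λ^N_{ij})` is
symmetric and invertible with two-sided inverse `μ`, then `μ` satisfies the symmetry
relation `Σ_l μ^{il} λ^j_{lk} = Σ_l μ^{lj} λ^i_{kl}`. -/
theorem inverse_pairing_satisfies_symmetry
    {ι : Type*} [Fintype ι] [DecidableEq ι] [Nonempty ι]
    (z N : ι)
    (lam : ι → ι → ι → ℚ)
    (hunit : ∀ i k : ι, lam k i z = (if k = i then 1 else 0) ∧
                        lam k z i = (if k = i then 1 else 0))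
    (hassoc : ∀ i j k s : ι, ∑ l, lam l i j * lam s l k = ∑ l, lam s i l * lam l j k)
    (hsym : ∀ i j : ι, lam N i j = lam N j i)
    (mu : ι → ι → ℚ)
    (hinv₁ : ∀ i k : ι, ∑ l, mu i l * lam N l k = (if i = k then 1 else 0))
    (hinv₂ : ∀ i k : ι, ∑ l, lam N i l * mu l k = (if k = i then 1 else 0)) :
    ∀ i j k : ι, ∑ l, mu i l * lam j l k = ∑ l, mu l j * lam i k l := by
  -- cyclic symmetry of the triple product ⟨x_a x_b x_c⟩
  have hT : ∀ a b c : ι, (∑ s, lam s a b * lam N s c) = ∑ s, lam s b c * lam N s a := by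
    intro a b c
    rw [hassoc a b c N]
    exact Finset.sum_congr rfl fun s _ => by rw [hsym a s, mul_comm]
  -- recover structure constants from the triple product (multiplying μ on the right)
  have hrep : ∀ a b c : ι,
      lam c a b = ∑ m, (∑ s, lam s a b * lam N s m) * mu m c := by
    intro a b c
    simp only [Finset.sum_mul]
    rw [Finset.sum_comm]
    have h : ∀ s : ι, (∑ m, lam s a b * lam N s m * mu m c)
        = lam s a b * (if c = s then 1 else 0) := by
      intro s
      rw [← hinv₂ s c, Finset.mul_sum]
      exact Finset.sum_congr rfl fun m _ => by ring
    simp [h]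
  -- recover structure constants from the triple product (multiplying μ on the left)
  have hrep' : ∀ a b c : ι,
      lam c a b = ∑ m, mu c m * (∑ s, lam s a b * lam N s m) := by
    intro a b c
    simp only [Finset.mul_sum]
    rw [Finset.sum_comm]
    have h : ∀ s : ι, (∑ m, mu c m * (lam s a b * lam N s m))
        = lam s a b * (if c = s then 1 else 0) := by
      intro s
      rw [← hinv₁ c s, Finset.mul_sum]
      exact Finset.sum_congr rfl fun m _ => by rw [hsym m s]; ring
    simp [h]
  intro i j k
  calc ∑ l, mu i l * lam j l k
      = ∑ l, ∑ m, ∑ s, mu i l * (lam s k m * lam N s l) * mu m j := by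
        refine Finset.sum_congr rfl fun l _ => ?_
        rw [hrep l k j, Finset.mul_sum]
        refine Finset.sum_congr rfl fun m _ => ?_
        rw [hT l k m, Finset.sum_mul, Finset.mul_sum]
        exact Finset.sum_congr rfl fun s _ => by ring
    _ = ∑ m, ∑ l, ∑ s, mu m j * (mu i l * (lam s k m * lam N s l)) := by
        rw [Finset.sum_comm]
        exact Finset.sum_congr rfl fun m _ => Finset.sum_congr rfl fun l _ =>
          Finset.sum_congr rfl fun s _ => by ring
    _ = ∑ l, mu l j * lam i k l := by
        refine Finset.sum_congr rfl fun m _ => ?_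
        rw [hrep' k m i, Finset.mul_sum]
        refine Finset.sum_congr rfl fun l _ => ?_
        rw [Finset.mul_sum, Finset.mul_sum]
end

section
/- Suppose μ : ι → ι → ℚ satisfies the symmetry relation Σ_l μ^{il} λ^j_{lk} = Σ_l μ^{lj} λ^i_{kl} for all i, j, k, and that μ is a two-sided inverse of the matrix (λ^N_{ij}): Σ_l μ^{il} λ^N_{lk} = δ^i_k and Σ_l λ^N_{il} μ^{lk} = δ^k_i. Then the Frobenius identity holds: Σ_j λ^j_{i'k} λ^N_{jj'} = Σ_i λ^N_{i'i} λ^i_{kj'} for all i', k, j'. -/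
/-- If `μ` satisfies the symmetry relation
`Σ_l μ^{il} λ^j_{lk} = Σ_l μ^{lj} λ^i_{kl}` and is a two-sided inverse of the Poincaré
pairing matrix `(λ^N_{ij})`, then the Frobenius identity
`Σ_j λ^j_{i'k} λ^N_{jj'} = Σ_i λ^N_{i'i} λ^i_{kj'}` holds. -/
theorem symmetry_implies_frobenius_identity
    {ι : Type*} [Fintype ι] [DecidableEq ι] [Nonempty ι]
    (z N : ι)
    (lam : ι → ι → ι → ℚ)
    (mu : ι → ι → ℚ)
    (hsymm : ∀ i j k : ι, ∑ l, mu i l * lam j l k = ∑ l, mu l j * lam i k l)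
    (hinv₁ : ∀ i k : ι, ∑ l, mu i l * lam N l k = (if i = k then 1 else 0))
    (hinv₂ : ∀ i k : ι, ∑ l, lam N i l * mu l k = (if k = i then 1 else 0)) :
    ∀ i' k j' : ι, ∑ j, lam j i' k * lam N j j' = ∑ i, lam N i' i * lam i k j' := by
  intro i' k j'
  have h1 : ∀ j, lam j i' k = ∑ a, lam N i' a * ∑ b, mu a b * lam j b k := by
    intro j
    have : ∑ a, lam N i' a * ∑ b, mu a b * lam j b k
        = ∑ b, (∑ a, lam N i' a * mu a b) * lam j b k := by
      simp only [Finset.mul_sum]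
      rw [Finset.sum_comm]
      simp only [Finset.sum_mul, mul_assoc]
    rw [this]
    simp only [hinv₂]
    simp [Finset.sum_ite_eq, Finset.mem_univ]
  calc ∑ j, lam j i' k * lam N j j'
      = ∑ j, (∑ a, lam N i' a * ∑ b, mu a b * lam j b k) * lam N j j' := by
        simp only [← h1]
    _ = ∑ j, (∑ a, lam N i' a * ∑ b, mu b j * lam a k b) * lam N j j' := by
        simp only [hsymm]
    _ = ∑ a, lam N i' a * ∑ b, lam a k b * ∑ j, mu b j * lam N j j' := by
        simp only [Finset.mul_sum, Finset.sum_mul]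
        rw [Finset.sum_comm]
        refine Finset.sum_congr rfl fun a _ => ?_
        rw [Finset.sum_comm]
        refine Finset.sum_congr rfl fun b _ => ?_
        refine Finset.sum_congr rfl fun j _ => ?_
        ring
    _ = ∑ i, lam N i' i * lam i k j' := by
        congr 1; ext a
        congr 1
        simp only [hinv₁]
        simp [Finset.sum_ite_eq, Finset.mem_univ]
end

section
/- Let A be a finite-dimensional commutative ℚ-algebra with basis b : Basis ι ℚ A (ι finite), and let φ : A →ₗ[ℚ] ℚ be a linear functional whose Gram matrix G, defined by G i j = φ (b i * b j), is invertible. Let w = Σ_{i,j} (G⁻¹ i j) • (b i ⊗ₜ b j) ∈ A ⊗[ℚ] A. Then for all a, c ∈ A: (a ⊗ₜ 1) * w * (1 ⊗ₜ c) = w * (1 ⊗ₜ (a * c)). -/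
/-!
When the pairing `(x, y) ↦ φ (x * y)` is nondegenerate, `x ⊗ y ↦ (z ↦ φ (z * x) • y)` is a linear
isomorphism `A ⊗ A ≃ End A`, and the Gram-matrix element `w` corresponds to the identity.
Under this isomorphism, left multiplication by `a ⊗ 1` becomes precomposition with right
multiplication by `a`, and right multiplication by `1 ⊗ a` becomes postcomposition with it; both
send the identity to the same map, so `(a ⊗ 1) * w = w * (1 ⊗ a)`.
-/

open scoped TensorProduct

namespace LinearMap

variable {K A : Type*} [Field K] [Ring A] [Algebra K A]

def mulForm (φ : A →ₗ[K] K) : LinearMap.BilinForm K A := (mul K A).compr₂ φ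

@[simp]
lemma mulForm_apply (φ : A →ₗ[K] K) (x y : A) : φ.mulForm x y = φ (x * y) := rfl

variable [FiniteDimensional K A] {φ : A →ₗ[K] K}

noncomputable def tensorEquivEnd (hφ : φ.mulForm.Nondegenerate) : A ⊗[K] A ≃ₗ[K] Module.End K A :=
  (LinearEquiv.rTensor A (φ.mulForm.flip.toDual (BilinForm.nondegenerate_flip_iff.mpr hφ))).trans
    (dualTensorHomEquiv K A A)

variable (hφ : φ.mulForm.Nondegenerate)

@[simp]
lemma tensorEquivEnd_tmul_apply (x y z : A) : tensorEquivEnd hφ (x ⊗ₜ y) z = φ (z * x) • y := by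
  simp [tensorEquivEnd, BilinForm.toDual_def]

lemma tensorEquivEnd_tmul_one_mul (a : A) (t : A ⊗[K] A) :
    tensorEquivEnd hφ ((a ⊗ₜ 1) * t) = tensorEquivEnd hφ t ∘ₗ mulRight K a := by
  induction t using TensorProduct.induction_on with
  | zero => simp
  | tmul x y => ext z; simp [mul_assoc]
  | add t t' ht ht' => simp [mul_add, ht, ht', add_comp]

lemma tensorEquivEnd_mul_one_tmul (a : A) (t : A ⊗[K] A) :
    tensorEquivEnd hφ (t * (1 ⊗ₜ a)) = mulRight K a ∘ₗ tensorEquivEnd hφ t := by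
  induction t using TensorProduct.induction_on with
  | zero => simp
  | tmul x y => ext z; simp
  | add t t' ht ht' => simp [add_mul, ht, ht', comp_add]

lemma tmul_one_mul_eq_mul_one_tmul {t : A ⊗[K] A} (ht : tensorEquivEnd hφ t = id) (a : A) :
    (a ⊗ₜ 1) * t = t * (1 ⊗ₜ a) :=
  (tensorEquivEnd hφ).injective <| by
    rw [tensorEquivEnd_tmul_one_mul, tensorEquivEnd_mul_one_tmul, ht, id_comp, comp_id]

lemma tensorEquivEnd_sum_inv_toMatrix {ι : Type*} [Fintype ι] [DecidableEq ι]
    (b : Module.Basis ι K A) :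
    tensorEquivEnd hφ (∑ i, ∑ j, (BilinForm.toMatrix b φ.mulForm)⁻¹ i j • (b i ⊗ₜ b j)) = id := by
  set G := BilinForm.toMatrix b φ.mulForm
  have hG : IsUnit G.det := ((BilinForm.nondegenerate_iff_det_ne_zero b).mp hφ).isUnit
  refine b.ext fun k => ?_
  calc tensorEquivEnd hφ (∑ i, ∑ j, G⁻¹ i j • (b i ⊗ₜ b j)) (b k)
      = ∑ j, (G * G⁻¹) k j • b j := by
        simp only [map_sum, map_smul, sum_apply, smul_apply, tensorEquivEnd_tmul_apply, smul_smul,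
          Matrix.mul_apply, Finset.sum_smul]
        rw [Finset.sum_comm]
        simp [G, mul_comm]
    _ = b k := by simp [Matrix.mul_nonsing_inv G hG, Matrix.one_apply]

end LinearMap

/-- relation (31) of the paper: For a finite-dimensional commutative
ℚ-algebra `A` with basis `b` and a linear functional `φ` whose Gram matrix
`G i j = φ (b i * b j)` is invertible, the element `w = Σ_{i,j} (G⁻¹ i j) • (b i ⊗ b j)`
of `A ⊗[ℚ] A` satisfies `(a ⊗ 1) * w * (1 ⊗ c) = w * (1 ⊗ (a * c))` for all `a c ∈ A`. -/
theorem inverse_gram_tensor_two_sided_symmetry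
    {ι : Type*} [Fintype ι] [DecidableEq ι]
    {A : Type*} [CommRing A] [Algebra ℚ A]
    (b : Module.Basis ι ℚ A)
    (φ : A →ₗ[ℚ] ℚ)
    (G : Matrix ι ι ℚ)
    (hG : ∀ i j, G i j = φ (b i * b j))
    (hinv : IsUnit G.det)
    (w : A ⊗[ℚ] A)
    (hw : w = ∑ i, ∑ j, (G⁻¹ i j) • (b i ⊗ₜ[ℚ] b j)) :
    ∀ a c : A, (a ⊗ₜ[ℚ] (1 : A)) * w * ((1 : A) ⊗ₜ[ℚ] c) = w * ((1 : A) ⊗ₜ[ℚ] (a * c)) := by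
  intro a c
  have : FiniteDimensional ℚ A := .of_basis b
  obtain rfl : G = LinearMap.BilinForm.toMatrix b φ.mulForm := Matrix.ext fun i j => by simp [hG]
  have hφ : φ.mulForm.Nondegenerate :=
    (LinearMap.BilinForm.nondegenerate_iff_det_ne_zero b).mpr hinv.ne_zero
  have hw_id : LinearMap.tensorEquivEnd hφ w = LinearMap.id :=
    hw ▸ LinearMap.tensorEquivEnd_sum_inv_toMatrix hφ b
  rw [LinearMap.tmul_one_mul_eq_mul_one_tmul hφ hw_id, mul_assoc,
    Algebra.TensorProduct.tmul_mul_tmul, one_mul]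
end

section
/- Let ι and κ be finite nonempty index types, with a distinguished element N ∈ ι and a distinguished element 0 ∈ κ. Suppose: (i) ν : κ → κ → κ → ℚ satisfies the unit condition ν^s_{0k} = ν^s_{k0} = δ^s_k for all s, k ∈ κ; (ii) μ : ι → κ → ℚ satisfies the symmetry relation Σ_{j∈κ} μ^{ij} ν^s_{jk} = Σ_{l∈ι} μ^{ls} λ^i_{kl} for all i ∈ ι and s, k ∈ κ, where λ : ι → κ → ι → ℚ (written λ^i_{kl}, output index i ∈ ι, with k ∈ κ, l ∈ ι); (iii) μ^{Nj} = δ^j_0 for all j ∈ κ. Then Σ_{l∈ι} μ^{ls} λ^N_{kl} = δ^s_k for all s, k ∈ κ; that is, the matrix μ is the inverse of the matrix (λ^N_{kl}). -/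
/-- manifolds with boundary: with `ν^s_{jk}` (written `nu s j k`) the
structure constants of the cup product on `H^*(M;ℚ)` (indexed by `κ`, with unit `y_0`),
`λ^i_{kl}` (written `lam i k l`) the structure constants of the module pairing of
`H^*(M)` on `H^*(M,∂M)` (indexed by `ι`, top class `x_N`), if `μ` satisfies the symmetry
relation `Σ_{j∈κ} μ^{ij} ν^s_{jk} = Σ_{l∈ι} μ^{ls} λ^i_{kl}` and the normalization
`μ^{Nj} = δ^j_0`, then `Σ_{l∈ι} μ^{ls} λ^N_{kl} = δ^s_k`, i.e. `μ` is the inverse of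
the pairing matrix `(λ^N_{kl})`. -/
theorem boundary_symmetric_class_mu_is_inverse_of_pairing
    {ι : Type*} [Fintype ι] [DecidableEq ι] [Nonempty ι]
    {κ : Type*} [Fintype κ] [DecidableEq κ] [Nonempty κ]
    (N : ι) (z : κ)
    (nu : κ → κ → κ → ℚ)
    (hunit : ∀ s k : κ, nu s z k = (if s = k then 1 else 0) ∧
                        nu s k z = (if s = k then 1 else 0))
    (lam : ι → κ → ι → ℚ)
    (mu : ι → κ → ℚ)
    (hsymm : ∀ (i : ι) (s k : κ), ∑ j, mu i j * nu s j k = ∑ l, mu l s * lam i k l)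
    (hnorm : ∀ j : κ, mu N j = (if j = z then 1 else 0)) :
    ∀ s k : κ, ∑ l, mu l s * lam N k l = (if s = k then 1 else 0) := by
  intro s k
  rw [← hsymm N s k]
  simp [hnorm, ite_mul, (hunit s k).1]
end
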